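/- Let x₁,…,x_N be arbitrary vectors in ℝⁿ. Then there exists a subset E ⊆ {1,…,N} such that Σ_{i≠j} ⟨x_i, x_j⟩ ≤ 4 Σ_{i∈E} Σ_{j∈Eᶜ} ⟨x_i, x_j⟩, where the first sum is over all ordered pairs (i,j) with i ≠ j and Eᶜ = {1,…,N} \ E. -/
import Mathlib


open MeasureTheory ProbabilityTheory
open scoped RealInnerProductSpace Pointwise ENNReal

noncomputable section

/-- A measure on `ℝⁿ` is log-concave if it satisfies the
Prékopa–Leindler / Borell multiplicative inequality on compact sets. -/
def IsLogConcave {n : ℕ} (μ : Measure (EuclideanSpace ℝ (Fin n))) : Prop :=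
  ∀ A B : Set (EuclideanSpace ℝ (Fin n)), IsCompact A → IsCompact B →
    ∀ θ : ℝ, 0 ≤ θ → θ ≤ 1 →
      μ A ^ θ * μ B ^ (1 - θ) ≤ μ (θ • A + (1 - θ) • B)

/-- A measure on `ℝⁿ` is isotropic if it is centered and its covariance
matrix is the identity. -/
def IsIsotropic {n : ℕ} (μ : Measure (EuclideanSpace ℝ (Fin n))) : Prop :=
  (∀ y : EuclideanSpace ℝ (Fin n), ∫ x, ⟪x, y⟫ ∂μ = 0) ∧
  (∀ y : EuclideanSpace ℝ (Fin n), ∫ x, ⟪x, y⟫ ^ 2 ∂μ = ‖y‖ ^ 2)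

/-- `Am X m = sup { |A z| : z ∈ S^{N-1}, |supp z| ≤ m }` where `A` is the
`n × N` matrix with columns `X₁, …, X_N`. -/
def Am {n N : ℕ} (X : Fin N → EuclideanSpace ℝ (Fin n)) (m : ℕ) : ℝ :=
  sSup {r : ℝ | ∃ z : EuclideanSpace ℝ (Fin N), ‖z‖ = 1 ∧
    {i | z i ≠ 0}.ncard ≤ m ∧ r = ‖∑ i, z i • X i‖}

/-- The `ψ₁` (sub-exponential Orlicz) norm of a real random variable. -/
def psi1Norm {Ω : Type*} [MeasurableSpace Ω] (P : Measure Ω) (Y : Ω → ℝ) : ℝ :=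
  sInf {C : ℝ | 0 < C ∧ ∫ ω, Real.exp (|Y ω| / C) ∂P ≤ 2}

lemma count_lemma {N : ℕ} (i j : Fin N) (hij : i ≠ j) :
    ((Finset.univ : Finset (Finset (Fin N))).filter
      (fun E => i ∈ E ∧ j ∉ E)).card = 2 ^ (N - 2) := by
  classical
  have hcard : (((Finset.univ : Finset (Fin N)).erase i).erase j).card = N - 2 := by
    rw [Finset.card_erase_of_mem (by simp [hij.symm]), Finset.card_erase_of_mem (by simp)]
    simp [Nat.sub_sub]
  rw [← hcard, ← Finset.card_powerset]
  refine Finset.card_bij' (fun E _ => E.erase i) (fun F _ => insert i F) ?hi ?hj ?left ?right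
  case hi =>
    intro E hE
    simp only [Finset.mem_filter] at hE
    simp only [Finset.mem_powerset]
    intro a ha
    simp only [Finset.mem_erase] at ha ⊢
    exact ⟨fun h => hE.2.2 (h ▸ ha.2), ha.1, Finset.mem_univ a⟩
  case hj =>
    intro F hF
    simp only [Finset.mem_powerset] at hF
    simp only [Finset.mem_filter, Finset.mem_univ, true_and]
    refine ⟨Finset.mem_insert_self i F, fun h => ?_⟩
    rcases Finset.mem_insert.1 h with h | h
    · exact hij h.symm
    · have := hF h
      simp [hij.symm] at this
  case left =>
    intro E hE
    simp only [Finset.mem_filter] at hE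
    exact Finset.insert_erase hE.2.1
  case right =>
    intro F hF
    simp only [Finset.mem_powerset] at hF
    apply Finset.erase_insert
    intro h
    have := hF h
    simp at this

lemma sum_over_subsets {N : ℕ} (g : Fin N → Fin N → ℝ) :
    ∑ E : Finset (Fin N), (∑ i ∈ E, ∑ j ∈ Eᶜ, g i j)
      = (2 ^ (N - 2) : ℝ) * ∑ i, ∑ j, if i ≠ j then g i j else 0 := by
  classical
  have h1 : ∀ E : Finset (Fin N), (∑ i ∈ E, ∑ j ∈ Eᶜ, g i j)
      = ∑ i, ∑ j, if i ∈ E ∧ j ∉ E then g i j else 0 := by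
    intro E
    have hj : ∀ i : Fin N, (∑ j, if j ∉ E then g i j else 0) = ∑ j ∈ Eᶜ, g i j := by
      intro i; rw [← Finset.sum_filter]; congr 1; ext; simp
    have h2 : (∑ i, if i ∈ E then (∑ j ∈ Eᶜ, g i j) else 0) = ∑ i ∈ E, ∑ j ∈ Eᶜ, g i j := by
      rw [← Finset.sum_filter]; congr 1; ext; simp
    rw [← h2]
    refine Finset.sum_congr rfl fun i _ => ?_
    by_cases hi : i ∈ E
    · simp only [hi, if_true, true_and]
      rw [← hj i]
    · simp [hi]
  calc ∑ E : Finset (Fin N), (∑ i ∈ E, ∑ j ∈ Eᶜ, g i j)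
      = ∑ E : Finset (Fin N), ∑ i, ∑ j, if i ∈ E ∧ j ∉ E then g i j else 0 :=
        Finset.sum_congr rfl fun E _ => h1 E
    _ = ∑ i, ∑ j, ∑ E : Finset (Fin N), if i ∈ E ∧ j ∉ E then g i j else 0 := by
        rw [Finset.sum_comm]
        exact Finset.sum_congr rfl fun i _ => Finset.sum_comm
    _ = ∑ i, ∑ j, if i ≠ j then (2 ^ (N - 2) : ℝ) * g i j else 0 := by
        refine Finset.sum_congr rfl fun i _ => Finset.sum_congr rfl fun j _ => ?_
        rw [← Finset.sum_filter]
        rw [Finset.sum_const, nsmul_eq_mul]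
        by_cases hij : i = j
        · subst hij
          simp only [ne_eq, not_true, if_false]
          have : (Finset.univ : Finset (Finset (Fin N))).filter
              (fun E => i ∈ E ∧ i ∉ E) = ∅ := by
            ext E; simp
          simp [this]
        · rw [count_lemma i j hij, if_pos hij]
          push_cast
          ring
    _ = (2 ^ (N - 2) : ℝ) * ∑ i, ∑ j, if i ≠ j then g i j else 0 := by
        rw [Finset.mul_sum]
        refine Finset.sum_congr rfl fun i _ => ?_
        rw [Finset.mul_sum]
        refine Finset.sum_congr rfl fun j _ => ?_
        by_cases hij : i ≠ j <;> simp [hij]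

/-- Lemma `dec`: for arbitrary vectors `x₁, …, x_N` in `ℝⁿ`
there is a subset `E ⊆ {1, …, N}` with
`Σ_{i ≠ j} ⟨x_i, x_j⟩ ≤ 4 Σ_{i ∈ E} Σ_{j ∈ Eᶜ} ⟨x_i, x_j⟩`. -/
theorem statement1 (n N : ℕ) (x : Fin N → EuclideanSpace ℝ (Fin n)) :
    ∃ E : Finset (Fin N),
      (∑ i, ∑ j, if i ≠ j then ⟪x i, x j⟫ else 0) ≤
        4 * ∑ i ∈ E, ∑ j ∈ Eᶜ, ⟪x i, x j⟫ := by
  classical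
  match N, x with
  | 0, x => exact ⟨∅, by simp⟩
  | 1, x =>
    refine ⟨∅, ?_⟩
    simp
  | (m + 2), x =>
    have key := sum_over_subsets (fun i j => ⟪x i, x j⟫)
    have hsum : ∑ _E : Finset (Fin (m + 2)),
          (∑ i, ∑ j, if i ≠ j then ⟪x i, x j⟫ else 0)
        ≤ ∑ E : Finset (Fin (m + 2)), 4 * ∑ i ∈ E, ∑ j ∈ Eᶜ, ⟪x i, x j⟫ := by
      rw [← Finset.mul_sum, key, Finset.sum_const, nsmul_eq_mul]
      have hcard : (Finset.univ : Finset (Finset (Fin (m + 2)))).card = 2 ^ (m + 2) := by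
        simp [Fintype.card_finset]
      rw [hcard]
      simp only [Nat.add_sub_cancel]
      push_cast
      ring_nf
      exact le_rfl
    obtain ⟨E, _, hE⟩ := Finset.exists_le_of_sum_le ⟨∅, Finset.mem_univ ∅⟩ hsum
    exact ⟨E, hE⟩
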